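/- Suppose a family of operators U_h(t,s) on a normed space H satisfies ‖U_h(t,s) A_h(s)‖ ≤ C(t−s)^{-1} for 0 ≤ s < t ≤ T, and ρ : [τ,T] → H is C¹ with ‖ρ(s)‖ ≤ M h^r (s−τ)^{-α} and ‖ρ'(s)‖ ≤ M h^r (s−τ)^{-1-α} for s ∈ (τ,T], where 0 ≤ α < 1. Then for τ < t ≤ T: ‖U_h(t,(t+τ)/2) ρ((t+τ)/2)‖ + ∫_τ^{(t+τ)/2} ‖U_h(t,s)A_h(s)‖·‖ρ(s)‖ ds + ∫_{(t+τ)/2}^t ‖ρ'(s)‖ ds ≤ C' M h^r (t−τ)^{-α}, with C' depending only on C and α. -/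

import Mathlib

/-!
Put `δ = (t - τ) / 2`, so that the midpoint `m = (t + τ) / 2` lies at distance `δ` from both
`τ` and `t`. The endpoint term is at most `C · M hʳ δ^{-α}` by the uniform bound on `U_h`. On
`[τ, m]` the smoothing factor `‖U_h(t,s) A_h(s)‖` is at most `C δ⁻¹`, and `(s - τ)^{-α}` is
integrable because `α < 1`, with integral `δ^{1-α} / (1 - α)`. On `[m, t]` the bound on `ρ'` is
largest at `s = m`, where it is `M hʳ δ^{-1-α}`, over an interval of length `δ`. Each term is thus
a multiple of `M hʳ δ^{-α} ≤ 2 M hʳ (t - τ)^{-α}`.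
-/

open Set MeasureTheory

section IntervalIntegral

variable {E F : Type*} [SeminormedAddGroup E] [SeminormedAddGroup F]

theorem norm_integral_le_of_norm_le_mul_sub_rpow {G : Type*} [NormedAddCommGroup G]
    [NormedSpace ℝ G] {f : ℝ → G} {a b K α : ℝ} (hab : a ≤ b)
    (hα : α < 1) (hf : ∀ s ∈ Ioc a b, ‖f s‖ ≤ K * (s - a) ^ (-α)) :
    ‖∫ s in a..b, f s‖ ≤ K * ((b - a) ^ (1 - α) / (1 - α)) := by
  have hint : IntervalIntegrable (fun s => (s - a) ^ (-α)) volume a b := by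
    simpa using (intervalIntegral.intervalIntegrable_rpow' (a := 0) (b := b - a) (r := -α)
      (by linarith)).comp_sub_right a
  calc ‖∫ s in a..b, f s‖ ≤ ∫ s in a..b, K * (s - a) ^ (-α) :=
        intervalIntegral.norm_integral_le_of_norm_le hab (ae_of_all _ hf) (hint.const_mul K)
    _ = K * ((b - a) ^ (1 - α) / (1 - α)) := by
        rw [intervalIntegral.integral_const_mul,
          intervalIntegral.integral_comp_sub_right (fun u => u ^ (-α)), sub_self,
          integral_rpow (Or.inl (by linarith)), Real.zero_rpow (by linarith), neg_add_eq_sub]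
        ring

theorem integral_norm_mul_norm_le_of_le_inv_sub_of_le_mul_sub_rpow {g : ℝ → F} {k : ℝ → E}
    {a b c C P α : ℝ} (hab : a ≤ b) (hbc : b < c) (hα : α < 1) (hC : 0 ≤ C)
    (hg : ∀ s ∈ Ioc a b, ‖g s‖ ≤ C * (c - s)⁻¹)
    (hk : ∀ s ∈ Ioc a b, ‖k s‖ ≤ P * (s - a) ^ (-α)) :
    ∫ s in a..b, ‖g s‖ * ‖k s‖ ≤ C * (c - b)⁻¹ * P * ((b - a) ^ (1 - α) / (1 - α)) := by
  refine (Real.le_norm_self _).trans (norm_integral_le_of_norm_le_mul_sub_rpow hab hα ?_)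
  intro s hs
  have hgs : ‖g s‖ ≤ C * (c - b)⁻¹ :=
    (hg s hs).trans (by gcongr; linarith [hs.2])
  calc ‖‖g s‖ * ‖k s‖‖ = ‖g s‖ * ‖k s‖ := Real.norm_of_nonneg (by positivity)
    _ ≤ C * (c - b)⁻¹ * (P * (s - a) ^ (-α)) :=
        mul_le_mul hgs (hk s hs) (norm_nonneg _) (by have := sub_pos.2 hbc; positivity)
    _ = C * (c - b)⁻¹ * P * (s - a) ^ (-α) := by ring

theorem integral_norm_le_of_norm_le_mul_sub_rpow_of_nonpos {f : ℝ → E} {a b c K β : ℝ}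
    (hab : a < b) (hbc : b ≤ c) (hK : 0 ≤ K) (hβ : β ≤ 0)
    (hf : ∀ s ∈ Ioc b c, ‖f s‖ ≤ K * (s - a) ^ β) :
    ∫ s in b..c, ‖f s‖ ≤ K * (b - a) ^ β * (c - b) := by
  have hconst : ∀ s ∈ uIoc b c, ‖‖f s‖‖ ≤ K * (b - a) ^ β := by
    intro s hs
    rw [uIoc_of_le hbc] at hs
    rw [Real.norm_of_nonneg (norm_nonneg _)]
    exact (hf s hs).trans (mul_le_mul_of_nonneg_left
      (Real.rpow_le_rpow_of_nonpos (sub_pos.2 hab) (by linarith [hs.1]) hβ) hK)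
  have := intervalIntegral.norm_integral_le_of_norm_le_const hconst
  rw [abs_of_nonneg (sub_nonneg.2 hbc)] at this
  exact (Real.le_norm_self _).trans this

end IntervalIntegral

theorem Real.div_two_rpow_neg_le {d α : ℝ} (hd : 0 ≤ d) (hα : α ≤ 1) :
    (d / 2) ^ (-α) ≤ 2 * d ^ (-α) := by
  rw [Real.div_rpow hd zero_le_two, Real.rpow_neg zero_le_two, div_inv_eq_mul, mul_comm]
  gcongr
  simpa using Real.rpow_le_rpow_of_exponent_le one_le_two hα

theorem abstract_theta_estimate
    {H : Type*} [NormedAddCommGroup H] [NormedSpace ℝ H]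
    (C α : ℝ) (hC : 0 < C) (hα0 : 0 ≤ α) (hα1 : α < 1) :
    ∃ C' > (0 : ℝ), ∀ (T τ M h r : ℝ)
      (U : ℝ → ℝ → H →L[ℝ] H) (A : ℝ → H →L[ℝ] H) (ρ ρ' : ℝ → H),
      0 ≤ τ → τ < T → 0 ≤ M → 0 < h →
      (∀ s t : ℝ, 0 ≤ s → s < t → t ≤ T → ‖(U t s).comp (A s)‖ ≤ C * (t - s)⁻¹) →
      (∀ s t : ℝ, ‖U t s‖ ≤ C) →
      (∀ s ∈ Ioc τ T, HasDerivAt ρ (ρ' s) s) →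
      (∀ s ∈ Ioc τ T, ‖ρ s‖ ≤ M * h ^ r * (s - τ) ^ (-α)) →
      (∀ s ∈ Ioc τ T, ‖ρ' s‖ ≤ M * h ^ r * (s - τ) ^ (-1 - α)) →
      ∀ t : ℝ, τ < t → t ≤ T →
        ‖U t ((t + τ) / 2) (ρ ((t + τ) / 2))‖ +
          (∫ s in τ..(t + τ) / 2, ‖(U t s).comp (A s)‖ * ‖ρ s‖) +
          (∫ s in ((t + τ) / 2)..t, ‖ρ' s‖) ≤ C' * M * h ^ r * (t - τ) ^ (-α) := by
  have h1α : 0 < 1 - α := by linarith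
  refine ⟨2 * (C + C / (1 - α) + 1), by positivity, ?_⟩
  intro T τ M h r U A ρ ρ' hτ0 _ hM hh hUA hU _ hρ hρ' t hτt htT
  set δ := (t - τ) / 2 with hδ
  have hδ0 : 0 < δ := by linarith
  have hmτ : (t + τ) / 2 - τ = δ := by ring
  have htm : t - (t + τ) / 2 = δ := by ring
  have hP : 0 ≤ M * h ^ r := by positivity
  have hend : ‖U t ((t + τ) / 2) (ρ ((t + τ) / 2))‖ ≤ C * (M * h ^ r * δ ^ (-α)) := by
    have hρm := hρ ((t + τ) / 2) ⟨by linarith, by linarith⟩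
    rw [hmτ] at hρm
    exact ((U _ _).le_opNorm _).trans (mul_le_mul (hU _ _) hρm (norm_nonneg _) hC.le)
  have hsmooth : ∫ s in τ..(t + τ) / 2, ‖(U t s).comp (A s)‖ * ‖ρ s‖ ≤
      C / (1 - α) * (M * h ^ r * δ ^ (-α)) := by
    have := integral_norm_mul_norm_le_of_le_inv_sub_of_le_mul_sub_rpow (b := (t + τ) / 2)
      (c := t) (by linarith) (by linarith) hα1 hC.le
      (fun s hs => hUA s t (by linarith [hs.1]) (by linarith [hs.2]) htT)
      (fun s hs => hρ s ⟨hs.1, by linarith [hs.2]⟩)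
    have hpow : δ ^ (1 - α) = δ ^ (-α) * δ := by rw [← Real.rpow_add_one hδ0.ne', neg_add_eq_sub]
    rw [htm, hmτ, hpow] at this
    convert this using 1
    field_simp
  have hderiv : ∫ s in ((t + τ) / 2)..t, ‖ρ' s‖ ≤ M * h ^ r * δ ^ (-α) := by
    have := integral_norm_le_of_norm_le_mul_sub_rpow_of_nonpos (b := (t + τ) / 2) (c := t)
      (β := -1 - α) (by linarith) (by linarith) hP (by linarith)
      (fun s hs => hρ' s ⟨by linarith [hs.1], by linarith [hs.2]⟩)
    rw [htm, hmτ, show -1 - α = -α - 1 by ring, Real.rpow_sub_one hδ0.ne'] at this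
    convert this using 1
    field_simp
  have hhalf : δ ^ (-α) ≤ 2 * (t - τ) ^ (-α) := Real.div_two_rpow_neg_le (by linarith) hα1.le
  calc _ ≤ (C + C / (1 - α) + 1) * (M * h ^ r * δ ^ (-α)) := by linarith
    _ ≤ (C + C / (1 - α) + 1) * (M * h ^ r * (2 * (t - τ) ^ (-α))) := by gcongr
    _ = 2 * (C + C / (1 - α) + 1) * M * h ^ r * (t - τ) ^ (-α) := by ring
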